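/- arXiv:2211.06067 — 2 statements merged into one kernel-verified Lean document; each statement's English description precedes it below -/
import Mathlib

section
/- Let S_t : T² → T² denote the translation S_t(x, y) = (x + t, y). Let (h_n)_{n ≥ 1} be μ-preserving homeomorphisms of T², set H_n = h_1 ∘ ⋯ ∘ h_n, let (q_n)_{n ≥ 1} be a strictly increasing sequence of positive integers and α_n = p_n/q_n rationals such that h_{n+1} ∘ S_{α_{n+1}} = S_{α_{n+1}} ∘ h_{n+1} for every n, and let L_n ≥ 1 be a Lipschitz constant for H_n with respect to the quotient metric on T². Assume that for every n ≥ 1, L_n · q_n · |α_{n+1} − α_n| ≤ 2^{−(n+1)}. Then the sequence T_n := H_n ∘ S_{α_{n+1}} ∘ H_n⁻¹ converges uniformly to a μ-preserving homeomorphism T of T² (and T_n⁻¹ converges uniformly to T⁻¹), and moreover for every n ≥ 1 and every natural number m ≤ q_{n+1}, sup_{z ∈ T²} d(T^m z, T_n^m z) ≤ 2^{−(n+1)}. -/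
open MeasureTheory Filter Topology
noncomputable section

abbrev Torus2 := UnitAddCircle × UnitAddCircle

/-- The translation `S_t : 𝕋² → 𝕋²`, `S_t(x, y) = (x + t, y)`. -/
def Storus (t : ℝ) : Torus2 → Torus2 := fun z => (z.1 + (t : UnitAddCircle), z.2)

/-!
Because `h_{n+1}` commutes with `S_{α_{n+1}}`, also `T_n = H_{n+1} ∘ S_{α_{n+1}} ∘ H_{n+1}⁻¹`,
so `T_{n+1}^m` and `T_n^m` are the images under `H_{n+1}` of translations by `m α_{n+2}` and by
`m α_{n+1}`. For `m ≤ q_{n+1}` the Lipschitz bound makes them `2^{-(n+2)}`-close; summing this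
geometric series shows that `(T_n)` and likewise `(T_n⁻¹)` are uniformly Cauchy, that their limits
are mutually inverse, and gives the estimate for `T^m`. The limit preserves `μ` because
`∫ f ∘ T_n dμ = ∫ f dμ` passes to the limit for every bounded continuous `f`.
-/

open Function

theorem storus_add (s t : ℝ) (z : Torus2) : Storus s (Storus t z) = Storus (s + t) z := by
  simp only [Storus, AddCircle.coe_add, add_assoc, add_comm (t : UnitAddCircle)]

theorem storus_zero : Storus 0 = id := by
  ext z <;> simp [Storus]

theorem storus_iterate (t : ℝ) (m : ℕ) : (Storus t)^[m] = Storus (m * t) := by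
  induction m with
  | zero => simp [storus_zero]
  | succ m ih =>
    ext1 z
    rw [iterate_succ_apply', ih, storus_add]
    push_cast
    ring_nf

theorem continuous_storus (t : ℝ) : Continuous (Storus t) :=
  (continuous_fst.add continuous_const).prodMk continuous_snd

theorem measurePreserving_storus (t : ℝ) :
    MeasurePreserving (Storus t) (volume : Measure Torus2) volume := by
  rw [Measure.volume_eq_prod]
  exact (measurePreserving_add_right volume (t : UnitAddCircle)).prod (.id volume)

theorem dist_storus_le (s t : ℝ) (z : Torus2) : dist (Storus s z) (Storus t z) ≤ |s - t| := by
  simp only [Storus, Prod.dist_eq, dist_add_left, dist_self]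
  refine max_le ?_ (abs_nonneg _)
  rw [dist_eq_norm, ← AddCircle.coe_sub, ← Real.norm_eq_abs]
  exact QuotientAddGroup.norm_mk_le_norm

theorem leftInverse_storus {s t : ℝ} (hst : s + t = 0) : LeftInverse (Storus s) (Storus t) :=
  fun z => by rw [storus_add, hst, storus_zero, id]

theorem Function.Commute.storus_neg {f : Torus2 → Torus2} {t : ℝ}
    (hf : Function.Commute f (Storus t)) : Function.Commute f (Storus (-t)) :=
  Semiconj.inverses_right hf (leftInverse_storus (add_neg_cancel t))
    (leftInverse_storus (neg_add_cancel t))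

/-- With `E = H_n` and `t = α_{n+1}` this is the paper's `T_n`. -/
def conjStorus (E : Torus2 ≃ₜ Torus2) (t : ℝ) (z : Torus2) : Torus2 := E (Storus t (E.symm z))

section conjStorus

variable (E : Torus2 ≃ₜ Torus2)

theorem semiconj_conjStorus (t : ℝ) : Semiconj E (Storus t) (conjStorus E t) :=
  fun z => by rw [conjStorus, E.symm_apply_apply]

theorem conjStorus_iterate (t : ℝ) (m : ℕ) : (conjStorus E t)^[m] = conjStorus E (m * t) := by
  ext1 z
  have := ((semiconj_conjStorus E t).iterate_right m).eq (E.symm z)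
  rwa [E.apply_symm_apply, storus_iterate, eq_comm] at this

theorem conjStorus_trans {e : Torus2 ≃ₜ Torus2} {t : ℝ} (he : Function.Commute e (Storus t)) :
    conjStorus (e.trans E) t = conjStorus E t := by
  ext1 z
  simp only [conjStorus, Homeomorph.trans_apply, Homeomorph.symm_trans_apply]
  rw [he.eq, e.apply_symm_apply]

theorem leftInverse_conjStorus {s t : ℝ} (hst : s + t = 0) :
    LeftInverse (conjStorus E s) (conjStorus E t) :=
  fun z => by simp only [conjStorus, E.symm_apply_apply, leftInverse_storus hst _,
    E.apply_symm_apply]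

theorem continuous_conjStorus (t : ℝ) : Continuous (conjStorus E t) :=
  E.continuous.comp ((continuous_storus t).comp E.symm.continuous)

theorem measurePreserving_conjStorus (hE : MeasurePreserving E volume volume) (t : ℝ) :
    MeasurePreserving (conjStorus E t) volume volume := by
  have hE' : MeasurePreserving E.toMeasurableEquiv volume volume := hE
  exact hE.comp ((measurePreserving_storus t).comp hE'.symm)

theorem dist_conjStorus_le {L : ℝ} (hL : 0 ≤ L) (hLip : ∀ u v, dist (E u) (E v) ≤ L * dist u v)
    (s t : ℝ) (z : Torus2) : dist (conjStorus E s z) (conjStorus E t z) ≤ L * |s - t| :=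
  (hLip _ _).trans (mul_le_mul_of_nonneg_left (dist_storus_le s t _) hL)

/-- As `e` commutes with `S_s`, both iterates are conjugates by `E ∘ e` of translations, by `m s`
and by `m t`. -/
theorem dist_conjStorus_trans_iterate_le {e : Torus2 ≃ₜ Torus2} {s : ℝ}
    (he : Function.Commute e (Storus s)) {L : ℝ} (hL : 0 ≤ L)
    (hLip : ∀ u v, dist (e.trans E u) (e.trans E v) ≤ L * dist u v) (t : ℝ) (m : ℕ) (z : Torus2) :
    dist ((conjStorus E s)^[m] z) ((conjStorus (e.trans E) t)^[m] z) ≤ L * (m * |s - t|) := by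
  have he' : Function.Commute e (Storus (m * s)) := by
    simpa only [storus_iterate] using he.iterate_right m
  rw [conjStorus_iterate, conjStorus_iterate, ← conjStorus_trans E he',
    show (m : ℝ) * |s - t| = |m * s - m * t| by rw [← mul_sub, abs_mul, Nat.abs_cast]]
  exact dist_conjStorus_le _ hL hLip _ _ z

end conjStorus

section geometric

variable {X : Type*} [PseudoMetricSpace X] {u : ℕ → X} {n : ℕ}

theorem dist_shift_le_geometric_two
    (hu : ∀ k, n ≤ k → dist (u k) (u (k + 1)) ≤ ((2 : ℝ) ^ (k + 2))⁻¹) (j : ℕ) :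
    dist (u (j + n)) (u (j + 1 + n)) ≤ ((2 : ℝ) ^ (n + 1))⁻¹ / 2 / 2 ^ j := by
  rw [add_right_comm]
  refine (hu _ (Nat.le_add_left n j)).trans_eq ?_
  rw [div_div, div_eq_mul_inv, ← mul_inv]
  ring

theorem cauchySeq_of_dist_succ_le_inv_two_pow
    (hu : ∀ k, n ≤ k → dist (u k) (u (k + 1)) ≤ ((2 : ℝ) ^ (k + 2))⁻¹) : CauchySeq u :=
  (cauchySeq_shift n).1 (cauchySeq_of_le_geometric_two (dist_shift_le_geometric_two hu))

theorem dist_le_inv_two_pow_of_tendsto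
    (hu : ∀ k, n ≤ k → dist (u k) (u (k + 1)) ≤ ((2 : ℝ) ^ (k + 2))⁻¹) {a : X}
    (ha : Tendsto u atTop (𝓝 a)) : dist (u n) a ≤ ((2 : ℝ) ^ (n + 1))⁻¹ := by
  simpa only [zero_add] using dist_le_of_le_geometric_two_of_tendsto₀
    (dist_shift_le_geometric_two hu) ((tendsto_add_atTop_iff_nat n).2 ha)

end geometric

theorem TendstoUniformly.tendsto_iterate {X : Type*} [UniformSpace X] {f : ℕ → X → X} {F : X → X}
    (hf : TendstoUniformly f F atTop) (hF : Continuous F) (m : ℕ) (x : X) :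
    Tendsto (fun n => (f n)^[m] x) atTop (𝓝 (F^[m] x)) := by
  induction m with
  | zero => exact tendsto_const_nhds
  | succ m ih =>
    simp only [iterate_succ_apply']
    exact hf.tendsto_comp hF.continuousAt ih

theorem TendstoUniformly.leftInverse {ι X Y : Type*} [TopologicalSpace Y] [UniformSpace X]
    [T2Space X] {p : Filter ι} [p.NeBot] {f : ι → X → Y} {g : ι → Y → X} {F : X → Y} {G : Y → X}
    (hgf : ∀ i, LeftInverse (g i) (f i)) (hf : ∀ x, Tendsto (fun i => f i x) p (𝓝 (F x)))
    (hg : TendstoUniformly g G p) (hG : Continuous G) : LeftInverse G F := fun x =>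
  tendsto_nhds_unique (hg.tendsto_comp hG.continuousAt (hf x))
    (tendsto_const_nhds.congr fun i => (hgf i x).symm)

/-- Integrals of bounded continuous functions pass to the limit by dominated convergence, and they
determine a finite Borel measure. -/
theorem MeasureTheory.MeasurePreserving.of_tendsto {X Y : Type*} [MeasurableSpace X]
    [TopologicalSpace Y] [MeasurableSpace Y] [HasOuterApproxClosed Y] [BorelSpace Y]
    {μ : Measure X} {ν : Measure Y} [IsFiniteMeasure μ] {u : ℕ → X → Y} {T : X → Y}
    (hu : ∀ᶠ n in atTop, MeasurePreserving (u n) μ ν) (hT : Measurable T)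
    (hlim : ∀ x, Tendsto (fun n => u n x) atTop (𝓝 (T x))) : MeasurePreserving T μ ν := by
  obtain ⟨n, hn⟩ := hu.exists
  have : IsFiniteMeasure ν := hn.map_eq ▸ inferInstance
  refine ⟨hT, ext_of_forall_integral_eq_of_IsFiniteMeasure fun g => ?_⟩
  have hgm : Measurable g := g.continuous.measurable
  have hcomp : ∀ {v : X → Y}, MeasurePreserving v μ ν → ∫ x, g (v x) ∂μ = ∫ y, g y ∂ν :=
    fun hv => by rw [← hv.map_eq, integral_map hv.measurable.aemeasurable hgm.aestronglyMeasurable]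
  rw [integral_map hT.aemeasurable hgm.aestronglyMeasurable]
  refine tendsto_nhds_unique (tendsto_integral_filter_of_dominated_convergence (fun _ => ‖g‖)
    (hu.mono fun k hk => (hgm.comp hk.measurable).aestronglyMeasurable)
    (.of_forall fun _ => ae_of_all _ fun x => g.norm_coe_le_norm _) (integrable_const _)
    (ae_of_all _ fun x => (g.continuous.tendsto _).comp (hlim x)))
    (tendsto_const_nhds.congr' (hu.mono fun k hk => (hcomp hk).symm))

section scheme

variable {h H : ℕ → Torus2 ≃ₜ Torus2} {q : ℕ → ℕ} {β L : ℕ → ℝ}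

theorem dist_iterate_conjStorus_succ_le
    (hHsucc : ∀ n, 1 ≤ n → H (n + 1) = (h (n + 1)).trans (H n))
    (hcomm : ∀ n, 1 ≤ n → Function.Commute (h (n + 1)) (Storus (β (n + 1))))
    (hL : ∀ n, 1 ≤ n → 0 ≤ L n)
    (hLip : ∀ n, 1 ≤ n → ∀ u v : Torus2, dist (H n u) (H n v) ≤ L n * dist u v)
    (hclose : ∀ n, 1 ≤ n → L n * q n * |β (n + 1) - β n| ≤ ((2 : ℝ) ^ (n + 1))⁻¹)
    (n : ℕ) (hn : 1 ≤ n) (m : ℕ) (hm : m ≤ q (n + 1)) (z : Torus2) :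
    dist ((conjStorus (H n) (β (n + 1)))^[m] z) ((conjStorus (H (n + 1)) (β (n + 2)))^[m] z) ≤
      ((2 : ℝ) ^ (n + 2))⁻¹ := by
  have hLip' := hLip (n + 1) (by omega)
  rw [hHsucc n hn] at hLip' ⊢
  refine (dist_conjStorus_trans_iterate_le (H n) (hcomm n hn) (hL _ (by omega)) hLip' _ m z).trans
    ?_
  calc L (n + 1) * (m * |β (n + 1) - β (n + 2)|)
      ≤ L (n + 1) * q (n + 1) * |β (n + 2) - β (n + 1)| := by
        rw [mul_assoc, abs_sub_comm]
        gcongr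
        exact hL _ (by omega)
    _ ≤ ((2 : ℝ) ^ (n + 2))⁻¹ := hclose (n + 1) (by omega)

theorem exists_tendstoUniformly_conjStorus
    (hHsucc : ∀ n, 1 ≤ n → H (n + 1) = (h (n + 1)).trans (H n))
    (hqmono : StrictMonoOn q (Set.Ici 1))
    (hcomm : ∀ n, 1 ≤ n → Function.Commute (h (n + 1)) (Storus (β (n + 1))))
    (hL : ∀ n, 1 ≤ n → 0 ≤ L n)
    (hLip : ∀ n, 1 ≤ n → ∀ u v : Torus2, dist (H n u) (H n v) ≤ L n * dist u v)
    (hclose : ∀ n, 1 ≤ n → L n * q n * |β (n + 1) - β n| ≤ ((2 : ℝ) ^ (n + 1))⁻¹) :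
    ∃ F : C(Torus2, Torus2),
      TendstoUniformly (fun n => conjStorus (H n) (β (n + 1))) F atTop ∧
      ∀ n, 1 ≤ n → ∀ m, m ≤ q (n + 1) → ∀ z,
        dist (F^[m] z) ((conjStorus (H n) (β (n + 1)))^[m] z) ≤ ((2 : ℝ) ^ (n + 1))⁻¹ := by
  have hstep := dist_iterate_conjStorus_succ_le hHsucc hcomm hL hLip hclose
  let F n : C(Torus2, Torus2) := ⟨conjStorus (H n) (β (n + 1)), continuous_conjStorus _ _⟩
  have hq : ∀ n, 1 ≤ n → 0 < q (n + 1) := fun n hn =>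
    Nat.zero_lt_of_lt (hqmono (Set.mem_Ici.2 hn) (Set.mem_Ici.2 (by omega)) n.lt_succ_self)
  have hF : CauchySeq F := cauchySeq_of_dist_succ_le_inv_two_pow (n := 1) fun n hn =>
    (ContinuousMap.dist_le (by positivity)).2 fun z => hstep n hn 1 (hq n hn) z
  obtain ⟨T, hT⟩ := cauchySeq_tendsto_of_complete hF
  have hTu : TendstoUniformly (fun n => conjStorus (H n) (β (n + 1))) T atTop :=
    ContinuousMap.tendsto_iff_tendstoUniformly.1 hT
  refine ⟨T, hTu, fun n hn m hm z => ?_⟩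
  rw [dist_comm]
  refine dist_le_inv_two_pow_of_tendsto (fun k hk => hstep k (hn.trans hk) m (hm.trans ?_) z)
    (hTu.tendsto_iterate T.continuous m z)
  exact hqmono.monotoneOn (show n + 1 ∈ Set.Ici 1 by simp) (show k + 1 ∈ Set.Ici 1 by simp)
    (by omega)

end scheme

theorem abc_uniform_convergence_general
    (h H : ℕ → (Torus2 ≃ₜ Torus2))
    (hmp : ∀ n, 1 ≤ n → MeasurePreserving (h n) volume volume)
    (hH1 : H 1 = h 1)
    (hHsucc : ∀ n, 1 ≤ n → H (n + 1) = (h (n + 1)).trans (H n))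
    (q : ℕ → ℕ)
    (hqmono : StrictMonoOn q (Set.Ici 1))
    (α : ℕ → ℝ)
    (hcomm : ∀ n, 1 ≤ n → ∀ z : Torus2,
      h (n + 1) (Storus (α (n + 1)) z) = Storus (α (n + 1)) (h (n + 1) z))
    (L : ℕ → ℝ) (hL1 : ∀ n, 1 ≤ n → 1 ≤ L n)
    (hLip : ∀ n, 1 ≤ n → ∀ u v : Torus2, dist (H n u) (H n v) ≤ L n * dist u v)
    (hclose : ∀ n, 1 ≤ n → L n * q n * |α (n + 1) - α n| ≤ ((2 : ℝ) ^ (n + 1))⁻¹) :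
    ∃ T : Torus2 ≃ₜ Torus2,
      MeasurePreserving T volume volume ∧
      TendstoUniformly (fun n (z : Torus2) => H n (Storus (α (n + 1)) ((H n).symm z)))
        T atTop ∧
      TendstoUniformly (fun n (z : Torus2) => H n (Storus (-(α (n + 1))) ((H n).symm z)))
        T.symm atTop ∧
      ∀ n, 1 ≤ n → ∀ m : ℕ, m ≤ q (n + 1) → ∀ z : Torus2,
        dist (T^[m] z)
          ((fun w : Torus2 => H n (Storus (α (n + 1)) ((H n).symm w)))^[m] z)
          ≤ ((2 : ℝ) ^ (n + 1))⁻¹ := by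
  have hL : ∀ n, 1 ≤ n → 0 ≤ L n := fun n hn => zero_le_one.trans (hL1 n hn)
  obtain ⟨F, hF, hFiter⟩ := exists_tendstoUniformly_conjStorus hHsucc hqmono hcomm hL hLip hclose
  obtain ⟨G, hG, -⟩ := exists_tendstoUniformly_conjStorus (β := fun n => -α n) hHsucc hqmono
    (fun n hn => Function.Commute.storus_neg (hcomm n hn)) hL hLip
    (fun n hn => by simpa only [neg_sub_neg, abs_sub_comm] using hclose n hn)
  have hH : ∀ n, 1 ≤ n → MeasurePreserving (H n) volume volume := by
    intro n hn
    induction n, hn using Nat.le_induction with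
    | base => exact hH1 ▸ hmp 1 le_rfl
    | succ n hn ih => rw [hHsucc n hn]; exact ih.comp (hmp (n + 1) (by omega))
  let T : Torus2 ≃ₜ Torus2 :=
    { toFun := F
      invFun := G
      left_inv := hG.leftInverse (fun _ => leftInverse_conjStorus _ (neg_add_cancel _))
        hF.tendsto_at G.continuous
      right_inv := hF.leftInverse (fun _ => leftInverse_conjStorus _ (add_neg_cancel _))
        hG.tendsto_at F.continuous
      continuous_toFun := F.continuous
      continuous_invFun := G.continuous }
  refine ⟨T, .of_tendsto ?_ T.continuous.measurable hF.tendsto_at, hF, hG, hFiter⟩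
  filter_upwards [eventually_ge_atTop 1] with n hn
  exact measurePreserving_conjStorus _ (hH n hn) _

/-- Convergence criterion for the approximation-by-conjugation scheme on `𝕋²` (in the
uniform topology): if `H_n = h_1 ∘ ⋯ ∘ h_n` with `h_{n+1}` commuting with `S_{α_{n+1}}`,
`L_n ≥ 1` is a Lipschitz constant for `H_n`, and `L_n · q_n · |α_{n+1} − α_n| ≤ 2^{−(n+1)}`,
then `T_n = H_n ∘ S_{α_{n+1}} ∘ H_n⁻¹` converges uniformly to a μ-preserving homeomorphism
`T` (and `T_n⁻¹ → T⁻¹` uniformly), with `sup_z d(T^m z, T_n^m z) ≤ 2^{−(n+1)}` for all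
`m ≤ q_{n+1}`. -/
theorem abc_uniform_convergence
    (h H : ℕ → (Torus2 ≃ₜ Torus2))
    (hmp : ∀ n, 1 ≤ n → MeasurePreserving (h n) volume volume)
    (hH1 : H 1 = h 1)
    (hHsucc : ∀ n, 1 ≤ n → H (n + 1) = (h (n + 1)).trans (H n))
    (q : ℕ → ℕ) (hqpos : ∀ n, 1 ≤ n → 0 < q n)
    (hqmono : StrictMonoOn q (Set.Ici 1))
    (p : ℕ → ℤ) (α : ℕ → ℝ) (hα : ∀ n, 1 ≤ n → α n = (p n : ℝ) / (q n : ℝ))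
    (hcomm : ∀ n, 1 ≤ n → ∀ z : Torus2,
      h (n + 1) (Storus (α (n + 1)) z) = Storus (α (n + 1)) (h (n + 1) z))
    (L : ℕ → ℝ) (hL1 : ∀ n, 1 ≤ n → 1 ≤ L n)
    (hLip : ∀ n, 1 ≤ n → ∀ u v : Torus2, dist (H n u) (H n v) ≤ L n * dist u v)
    (hclose : ∀ n, 1 ≤ n → L n * q n * |α (n + 1) - α n| ≤ ((2 : ℝ) ^ (n + 1))⁻¹) :
    ∃ T : Torus2 ≃ₜ Torus2,
      MeasurePreserving T volume volume ∧
      TendstoUniformly (fun n (z : Torus2) => H n (Storus (α (n + 1)) ((H n).symm z)))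
        T atTop ∧
      TendstoUniformly (fun n (z : Torus2) => H n (Storus (-(α (n + 1))) ((H n).symm z)))
        T.symm atTop ∧
      ∀ n, 1 ≤ n → ∀ m : ℕ, m ≤ q (n + 1) → ∀ z : Torus2,
        dist (T^[m] z)
          ((fun w : Torus2 => H n (Storus (α (n + 1)) ((H n).symm w)))^[m] z)
          ≤ ((2 : ℝ) ^ (n + 1))⁻¹ :=
  abc_uniform_convergence_general h H hmp hH1 hHsucc q hqmono α hcomm L hL1 hLip hclose
end
end

section
/- Let (X, d) be a compact metric space, T : X → X a continuous map, (T_n)_{n ≥ 1} a sequence of maps T_n : X → X, (K_n)_{n ≥ 1} a sequence of natural numbers, and (ε_n)_{n ≥ 1} a sequence of positive reals with ε_n → 0. Assume that for every n: (i) sup_{x ∈ X} d(T_n^k x, T^k x) ≤ ε_n for every natural number k ≤ K_n; and (ii) for every x ∈ X, the finite orbit segment {T_n^k x : 0 ≤ k ≤ K_n} is ε_n-dense in X (i.e., every point of X lies within distance ε_n of this set). Then T is minimal: for every x ∈ X, the forward orbit {T^k x : k ∈ ℕ} is dense in X. -/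
open Filter Topology
noncomputable section

/-- Criterion for minimality: if `T` is a continuous self-map of a compact metric space that is
well approximated by maps `T_n` (uniformly for all iterates up to time `K_n`, with error
`ε_n → 0`) all of whose orbit segments of length `K_n` are `ε_n`-dense, then every forward
orbit of `T` is dense, i.e. `T` is minimal. -/
theorem minimality_criterion {X : Type*} [MetricSpace X] [CompactSpace X]
    (T : X → X) (hT : Continuous T)
    (Tn : ℕ → X → X) (K : ℕ → ℕ) (ε : ℕ → ℝ)
    (hεpos : ∀ n, 0 < ε n) (hε0 : Tendsto ε atTop (𝓝 0))
    (happrox : ∀ n, ∀ k : ℕ, k ≤ K n → ∀ x : X, dist ((Tn n)^[k] x) (T^[k] x) ≤ ε n)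
    (hdense : ∀ n, ∀ x y : X, ∃ k : ℕ, k ≤ K n ∧ dist y ((Tn n)^[k] x) ≤ ε n) :
    ∀ x : X, Dense (Set.range fun k : ℕ => T^[k] x) := by
  intro x
  rw [Metric.dense_iff]
  intro y r hr
  obtain ⟨n, hn⟩ : ∃ n, ε n < r / 2 := by
    have := (hε0.eventually (gt_mem_nhds (by linarith : (0:ℝ) < r / 2))).exists
    exact this
  obtain ⟨k, hk, hd⟩ := hdense n x y
  refine ⟨T^[k] x, ?_, ⟨k, rfl⟩⟩
  have h2 := happrox n k hk x
  calc dist (T^[k] x) y ≤ dist (T^[k] x) ((Tn n)^[k] x) + dist ((Tn n)^[k] x) y :=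
        dist_triangle _ _ _
    _ ≤ ε n + ε n := by
        rw [dist_comm] at hd
        exact add_le_add (dist_comm ((Tn n)^[k] x) (T^[k] x) ▸ h2) hd
    _ < r := by linarith
end
end
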